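/- arXiv:2303.17352 — 3 statements merged into one kernel-verified Lean document; each statement's English description precedes it below -/
import Mathlib

section
/- For a fixed integer n ≥ 2, with R_ℓ = (2^n + ℓ − n − 1)/(2^n + ℓ − n − 2^ℓ) for ℓ ∈ {0,...,n−1}: 1/R_ℓ < 2/R_{ℓ−1} − 1 for all ℓ ∈ {1,...,n−1}. -/
/-! With `m = 2^n + ℓ - n`, the right-hand side simplifies to `(m - 2^ℓ) / (m - 2)`, since
`2 (m - 1 - 2^(ℓ-1)) - (m - 2) = m - 2^ℓ`, while `1 / R n ℓ = (m - 2^ℓ) / (m - 1)`. The common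
numerator is positive because `n + 2^ℓ < 2^n + ℓ` for `1 ≤ ℓ < n`, so shrinking the denominator
by one increases the fraction. -/

def R (n ℓ : ℕ) : ℚ :=
  ((2:ℚ)^n + ℓ - n - 1) / ((2:ℚ)^n + ℓ - n - 2^ℓ)

theorem add_two_pow_lt_two_pow_add {n ℓ : ℕ} (hℓ : 1 ≤ ℓ) (hℓn : ℓ < n) :
    n + 2 ^ ℓ < 2 ^ n + ℓ := by
  induction n, hℓn using Nat.le_induction with
  | base =>
    have : 2 ≤ 2 ^ ℓ := Nat.le_self_pow (by omega) 2
    rw [pow_succ]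
    omega
  | succ n _ ih =>
    have : 1 ≤ 2 ^ n := Nat.one_le_two_pow
    rw [pow_succ]
    omega

theorem one_div_R (n ℓ : ℕ) :
    1 / R n ℓ = ((2:ℚ)^n + ℓ - n - 2^ℓ) / ((2:ℚ)^n + ℓ - n - 1) := by
  rw [R, one_div_div]

theorem two_div_R_pred_sub_one {n ℓ : ℕ} (hℓ : 1 ≤ ℓ) (h : (2:ℚ)^n + ℓ - n - 2 ≠ 0) :
    2 / R n (ℓ - 1) - 1 = ((2:ℚ)^n + ℓ - n - 2^ℓ) / ((2:ℚ)^n + ℓ - n - 2) := by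
  obtain ⟨k, rfl⟩ := Nat.exists_eq_add_of_le' hℓ
  have h' : (2:ℚ)^n + k - n - 1 ≠ 0 := by push_cast at h; contrapose! h; linarith
  rw [R, Nat.add_sub_cancel, div_div_eq_mul_div, div_sub_one h']
  push_cast
  ring

theorem one_div_R_lt_two_div_R_pred_general (n ℓ : ℕ)
    (hℓ1 : 1 ≤ ℓ) (hℓ : ℓ ≤ n - 1) :
    1 / R n ℓ < 2 / R n (ℓ - 1) - 1 := by
  have hnum : (0:ℚ) < 2^n + ℓ - n - 2^ℓ := by
    have := add_two_pow_lt_two_pow_add (n := n) hℓ1 (by omega)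
    have : (n:ℚ) + 2^ℓ < 2^n + ℓ := by exact_mod_cast this
    linarith
  have htwo : (2:ℚ) ≤ 2^ℓ := by exact_mod_cast Nat.le_self_pow (by omega) 2
  rw [one_div_R, two_div_R_pred_sub_one hℓ1 (by linarith)]
  exact div_lt_div_of_pos_left hnum (by linarith) (by linarith)

/-- For `n ≥ 2` and `1 ≤ ℓ ≤ n-1`: `1/R_ℓ < 2/R_{ℓ-1} - 1`. -/
theorem one_div_R_lt_two_div_R_pred (n ℓ : ℕ) (hn : 2 ≤ n)
    (hℓ1 : 1 ≤ ℓ) (hℓ : ℓ ≤ n - 1) :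
    1 / R n ℓ < 2 / R n (ℓ - 1) - 1 :=
  one_div_R_lt_two_div_R_pred_general n ℓ hℓ1 hℓ
end

section
/- For n ≥ 4, the n+1 fan-out orderings E_{n,h}, h ∈ {0, 1, ..., n}, are pairwise distinct as parenthesisations; for n = 3 there are exactly 2 distinct fan-out orderings, and for n = 2 exactly 1. -/
/-- Full parenthesisations of the subchain `M_{a+1} ⋯ M_c`. -/
inductive Paren : ℕ → ℕ → Type
  | leaf (i : ℕ) : Paren i (i + 1)
  | node {a b c : ℕ} : Paren a b → Paren b c → Paren a c

/-- The set of index triplets of the multiplications of a parenthesisation. -/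
def Paren.triplets : ∀ {a c : ℕ}, Paren a c → Finset (ℕ × ℕ × ℕ)
  | _, _, .leaf _ => ∅
  | _, _, @Paren.node a b c l r => l.triplets ∪ r.triplets ∪ {(a, b, c)}

/-- The triplet set of the fan-out ordering `E_{n,h}`. -/
def fanSet (n h : ℕ) : Finset (ℕ × ℕ × ℕ) :=
  if h = 0 then (Finset.Icc 2 n).image (fun i => (0, i - 1, i))
  else if h = n then (Finset.Icc 1 (n - 1)).image (fun i => (i - 1, i, n))
  else ((Finset.Icc 1 (h - 1)).image fun i => (i - 1, i, h)) ∪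
       ((Finset.Icc (h + 2) n).image fun i => (h, i - 1, i)) ∪ {(0, h, n)}

/-- `p` is a fan-out parenthesisation of the chain `M₁ ⋯ M_n`. -/
def IsFanout (n : ℕ) (p : Paren 0 n) : Prop :=
  ∃ h ≤ n, p.triplets = fanSet n h


lemma Paren.lt' : ∀ {a c : ℕ}, Paren a c → a < c := by
  intro a c p; induction p <;> omega

lemma Paren.bounds : ∀ {a c : ℕ} (p : Paren a c), ∀ t ∈ p.triplets,
    a ≤ t.1 ∧ t.1 < t.2.1 ∧ t.2.1 < t.2.2 ∧ t.2.2 ≤ c := by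
  intro a c p
  induction p with
  | leaf i => simp [triplets]
  | node l r ihl ihr =>
    intro t ht
    simp only [triplets, Finset.mem_union, Finset.mem_singleton] at ht
    have hl := l.lt'
    have hr := r.lt'
    rcases ht with (ht | ht) | ht
    · have := ihl t ht; omega
    · have := ihr t ht; omega
    · subst ht; simp; omega

lemma Paren.triplets_inj : ∀ {a c : ℕ} (p q : Paren a c),
    p.triplets = q.triplets → p = q := by
  intro a c p
  induction p with
  | leaf i =>
    intro q h
    cases q with
    | leaf => rfl
    | node l r =>
      exfalso
      have hl := l.lt'; have hr := r.lt'
      omega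
  | node l r ihl ihr =>
    rename_i a b c
    intro q h
    cases q with
    | leaf =>
      exfalso
      have hl := l.lt'; have hr := r.lt'
      omega
    | node l' r' =>
      rename_i b'
      have hb : b = b' := by
        have hmem : (a, b, c) ∈ (Paren.node l' r').triplets := by
          rw [← h]; simp [triplets]
        simp only [triplets, Finset.mem_union, Finset.mem_singleton] at hmem
        have hl' := l'.lt'; have hr' := r'.lt'
        rcases hmem with (hm | hm) | hm
        · have := l'.bounds _ hm; simp at this; omega
        · have := r'.bounds _ hm; simp at this; omega
        · simp only [Prod.mk.injEq] at hm; omega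
      subst hb
      have hL : l.triplets = l'.triplets := by
        ext t
        have hl := l.lt'; have hr := r.lt'
        constructor
        · intro ht
          have hbd := l.bounds t ht
          have : t ∈ (Paren.node l' r').triplets := by
            rw [← h]; simp [triplets]; tauto
          simp only [triplets, Finset.mem_union, Finset.mem_singleton] at this
          rcases this with (hm | hm) | hm
          · exact hm
          · have := r'.bounds t hm; omega
          · exfalso; subst hm; simp at hbd; omega
        · intro ht
          have hbd := l'.bounds t ht
          have : t ∈ (Paren.node l r).triplets := by
            rw [h]; simp [triplets]; tauto
          simp only [triplets, Finset.mem_union, Finset.mem_singleton] at this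
          rcases this with (hm | hm) | hm
          · exact hm
          · have := r.bounds t hm; omega
          · exfalso; subst hm; simp at hbd; omega
      have hR : r.triplets = r'.triplets := by
        ext t
        have hl := l.lt'; have hr := r.lt'
        constructor
        · intro ht
          have hbd := r.bounds t ht
          have : t ∈ (Paren.node l' r').triplets := by
            rw [← h]; simp [triplets]; tauto
          simp only [triplets, Finset.mem_union, Finset.mem_singleton] at this
          rcases this with (hm | hm) | hm
          · have := l'.bounds t hm; omega
          · exact hm
          · exfalso; subst hm; simp at hbd; omega
        · intro ht
          have hbd := r'.bounds t ht
          have : t ∈ (Paren.node l r).triplets := by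
            rw [h]; simp [triplets]; tauto
          simp only [triplets, Finset.mem_union, Finset.mem_singleton] at this
          rcases this with (hm | hm) | hm
          · have := l.bounds t hm; omega
          · exact hm
          · exfalso; subst hm; simp at hbd; omega
      rw [ihl l' hL, ihr r' hR]

def Paren.cast {a c c' : ℕ} (h : c = c') (p : Paren a c) : Paren a c' := h ▸ p

lemma Paren.triplets_cast {a c c' : ℕ} (h : c = c') (p : Paren a c) :
    (p.cast h).triplets = p.triplets := by subst h; rfl

def rtl (a : ℕ) : (k : ℕ) → Paren a (a + k + 1)
  | 0 => .leaf a
  | k + 1 => .node (rtl a k) (.leaf (a + k + 1))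

def ltr (a : ℕ) : (k : ℕ) → Paren a (a + k + 1)
  | 0 => .leaf a
  | k + 1 => .node (.leaf a) ((ltr (a + 1) k).cast (by omega))

lemma union_sing {α : Type*} [DecidableEq α] (s : Finset α) (x : α) :
    s ∪ {x} = insert x s := by ext; simp [or_comm]

lemma icc_insert_right (u v : ℕ) (h : u ≤ v + 1) :
    Finset.Icc u (v + 1) = insert (v + 1) (Finset.Icc u v) := by
  ext; simp [Finset.mem_Icc]; omega

lemma icc_insert_left (u v : ℕ) (h : u ≤ v) :
    Finset.Icc u v = insert u (Finset.Icc (u + 1) v) := by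
  ext; simp [Finset.mem_Icc]; omega

lemma triplets_rtl (a k : ℕ) :
    (rtl a k).triplets = (Finset.Icc (a + 2) (a + k + 1)).image (fun i => (a, i - 1, i)) := by
  induction k with
  | zero => simp [rtl, Paren.triplets]
  | succ k ih =>
    show _ = Finset.image _ (Finset.Icc (a + 2) ((a + k + 1) + 1))
    rw [icc_insert_right _ _ (by omega), Finset.image_insert]
    show (rtl a k).triplets ∪ ∅ ∪ {(a, a + k + 1, a + k + 1 + 1)} = _
    rw [Finset.union_empty, union_sing, ih]
    simp

lemma triplets_ltr (a k : ℕ) :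
    (ltr a k).triplets = (Finset.Icc (a + 1) (a + k)).image (fun i => (i - 1, i, a + k + 1)) := by
  induction k generalizing a with
  | zero => simp [ltr, Paren.triplets]
  | succ k ih =>
    rw [icc_insert_left (a + 1) (a + (k + 1)) (by omega), Finset.image_insert]
    show ∅ ∪ ((ltr (a + 1) k).cast _).triplets ∪ {(a, a + 1, a + (k + 1) + 1)} = _
    rw [Finset.empty_union, union_sing, Paren.triplets_cast, ih,
      show a + 1 + k = a + (k + 1) from by omega]
    simp

lemma exists_paren (n h : ℕ) (hn : 2 ≤ n) (hh : h ≤ n) :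
    ∃ p : Paren 0 n, p.triplets = fanSet n h := by
  rcases eq_or_ne h 0 with rfl | h0
  · refine ⟨(rtl 0 (n - 1)).cast (by omega), ?_⟩
    rw [Paren.triplets_cast, triplets_rtl, fanSet, if_pos rfl,
      show 0 + (n - 1) + 1 = n from by omega]
  · rcases eq_or_ne h n with rfl | hn'
    · refine ⟨(ltr 0 (h - 1)).cast (by omega), ?_⟩
      rw [Paren.triplets_cast, triplets_ltr, fanSet, if_neg h0, if_pos rfl,
        show 0 + (h - 1) + 1 = h from by omega, show (0:ℕ) + (h - 1) = h - 1 from by omega]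
    · refine ⟨Paren.node (b := h) ((ltr 0 (h - 1)).cast (by omega))
        ((rtl h (n - h - 1)).cast (by omega)), ?_⟩
      show ((ltr 0 (h-1)).cast _).triplets ∪ ((rtl h (n-h-1)).cast _).triplets ∪ {(0, h, n)} = _
      rw [Paren.triplets_cast, Paren.triplets_cast, triplets_ltr, triplets_rtl,
        fanSet, if_neg h0, if_neg hn',
        show 0 + (h - 1) + 1 = h from by omega, show (0:ℕ) + (h - 1) = h - 1 from by omega,
        show h + (n - h - 1) + 1 = n from by omega]
lemma mem_fanSet {n h x y z : ℕ} (hh : h ≤ n) :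
    (x, y, z) ∈ fanSet n h ↔
      (h = 0 ∧ x = 0 ∧ z = y + 1 ∧ 2 ≤ z ∧ z ≤ n) ∨
      (0 < h ∧ h = n ∧ y = x + 1 ∧ z = n ∧ 1 ≤ y ∧ y + 1 ≤ n) ∨
      (0 < h ∧ h < n ∧ ((y = x + 1 ∧ z = h ∧ 1 ≤ y ∧ y ≤ h - 1) ∨
        (x = h ∧ z = y + 1 ∧ h + 2 ≤ z ∧ z ≤ n) ∨ (x = 0 ∧ y = h ∧ z = n))) := by
  unfold fanSet
  split_ifs with H1 H2
  · simp only [Finset.mem_image, Finset.mem_Icc, Prod.mk.injEq]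
    constructor
    · rintro ⟨i, hi, h1, h2, h3⟩; left; omega
    · intro hr
      refine ⟨z, by omega, by omega, by omega, rfl⟩
  · simp only [Finset.mem_image, Finset.mem_Icc, Prod.mk.injEq]
    constructor
    · rintro ⟨i, hi, h1, h2, h3⟩; right; left; omega
    · intro hr
      refine ⟨y, by omega, by omega, rfl, by omega⟩
  · simp only [Finset.mem_union, Finset.mem_image, Finset.mem_Icc, Finset.mem_singleton,
      Prod.mk.injEq]
    constructor
    · rintro ((⟨i, hi, h1, h2, h3⟩ | ⟨i, hi, h1, h2, h3⟩) | ⟨h1, h2, h3⟩)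
      · right; right; refine ⟨by omega, by omega, ?_⟩; left; omega
      · right; right; refine ⟨by omega, by omega, ?_⟩; right; left; omega
      · right; right; refine ⟨by omega, by omega, ?_⟩; right; right; omega
    · rintro (hr | hr | ⟨hp, hq, hr | hr | hr⟩)
      · omega
      · omega
      · left; left; exact ⟨y, by omega, by omega, by omega, by omega⟩
      · left; right; exact ⟨z, by omega, by omega, by omega, by omega⟩
      · right; omega

set_option maxHeartbeats 2000000 in
lemma fanSet_injOn (n : ℕ) (hn : 4 ≤ n) {h1 h2 : ℕ} (hh1 : h1 ≤ n) (hh2 : h2 ≤ n)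
    (heq : fanSet n h1 = fanSet n h2) : h1 = h2 := by
  have F : ∀ x y z : ℕ, ((x, y, z) ∈ fanSet n h1) ↔ ((x, y, z) ∈ fanSet n h2) := by
    intro x y z; rw [heq]
  have F' : ∀ x y z : ℕ,
      ((h1 = 0 ∧ x = 0 ∧ z = y + 1 ∧ 2 ≤ z ∧ z ≤ n) ∨
      (0 < h1 ∧ h1 = n ∧ y = x + 1 ∧ z = n ∧ 1 ≤ y ∧ y + 1 ≤ n) ∨
      (0 < h1 ∧ h1 < n ∧ ((y = x + 1 ∧ z = h1 ∧ 1 ≤ y ∧ y ≤ h1 - 1) ∨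
        (x = h1 ∧ z = y + 1 ∧ h1 + 2 ≤ z ∧ z ≤ n) ∨ (x = 0 ∧ y = h1 ∧ z = n)))) ↔
      ((h2 = 0 ∧ x = 0 ∧ z = y + 1 ∧ 2 ≤ z ∧ z ≤ n) ∨
      (0 < h2 ∧ h2 = n ∧ y = x + 1 ∧ z = n ∧ 1 ≤ y ∧ y + 1 ≤ n) ∨
      (0 < h2 ∧ h2 < n ∧ ((y = x + 1 ∧ z = h2 ∧ 1 ≤ y ∧ y ≤ h2 - 1) ∨
        (x = h2 ∧ z = y + 1 ∧ h2 + 2 ≤ z ∧ z ≤ n) ∨ (x = 0 ∧ y = h2 ∧ z = n)))) := by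
    intro x y z
    rw [← mem_fanSet hh1, ← mem_fanSet hh2]
    exact F x y z
  have c1 : h1 = 0 ∨ h1 = n ∨ (0 < h1 ∧ h1 < n) := by omega
  have c2 : h2 = 0 ∨ h2 = n ∨ (0 < h2 ∧ h2 < n) := by omega
  rcases c1 with e1 | e1 | c1 <;> rcases c2 with e2 | e2 | c2
  · omega
  · have A := F' 0 (n - 1) n; omega
  · have A := F' 0 (n - 1) n
    have C := F' 0 1 2
    omega
  · have A := F' 0 (n - 1) n; omega
  · omega
  · have B := F' 0 1 n
    have D := F' 1 2 n
    omega
  · have A := F' 0 (n - 1) n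
    have C := F' 0 1 2
    omega
  · have B := F' 0 1 n
    have D := F' 1 2 n
    omega
  · have G := F' 0 h1 n; omega

lemma card_aux (n : ℕ) (hn : 2 ≤ n) :
    Nat.card {p : Paren 0 n // IsFanout n p} =
      ((Finset.range (n + 1)).image (fanSet n)).card := by
  set S := (Finset.range (n + 1)).image (fanSet n) with hS
  have hf : ∀ p : {p : Paren 0 n // IsFanout n p}, p.1.triplets ∈ S := by
    rintro ⟨p, h, hh, ht⟩
    rw [ht]
    exact Finset.mem_image_of_mem _ (Finset.mem_range.mpr (by omega))
  rw [← Nat.card_eq_finsetCard]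
  refine Nat.card_eq_of_bijective (fun p => ⟨p.1.triplets, hf p⟩) ⟨?_, ?_⟩
  · rintro ⟨p, hp⟩ ⟨q, hq⟩ h
    simp only [Subtype.mk.injEq] at h ⊢
    exact Paren.triplets_inj p q h
  · rintro ⟨s, hs⟩
    rw [hS, Finset.mem_image] at hs
    obtain ⟨h, hh, rfl⟩ := hs
    obtain ⟨p, hp⟩ := exists_paren n h hn (by simp at hh; omega)
    exact ⟨⟨p, h, by simp at hh; omega, hp⟩, by simp [hp]⟩

/-- For `n ≥ 4` the `n+1` fan-out orderings are pairwise distinct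
parenthesisations; for `n = 3` there are exactly `2` distinct ones, and for
`n = 2` exactly `1`. -/
theorem card_fanout_orderings (n : ℕ) :
    (4 ≤ n → Nat.card {p : Paren 0 n // IsFanout n p} = n + 1) ∧
    Nat.card {p : Paren 0 3 // IsFanout 3 p} = 2 ∧
    Nat.card {p : Paren 0 2 // IsFanout 2 p} = 1 := by
  refine ⟨fun hn => ?_, ?_, ?_⟩
  · rw [card_aux n (by omega)]
    rw [Finset.card_image_of_injOn, Finset.card_range]
    intro h1 hm1 h2 hm2 heq
    simp only [Finset.coe_range, Set.mem_Iio] at hm1 hm2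
    exact fanSet_injOn n hn (by omega) (by omega) heq
  · rw [card_aux 3 (by omega)]
    decide
  · rw [card_aux 2 (by omega)]
    decide
end

section
/- Let n ≥ 3 and h ∈ {0,...,n}. For every real r > 0 there exists an instance k of positive integers such that the cost of the fan-out ordering E_{n,h} on k is strictly less than 1/(1+r) times the cost of any other ordering: specifically, taking k_h = 1 and k_i = α for i ≠ h with α a sufficiently large integer, T(B, k) / T(E_{n,h}, k) ≥ 1 + (α − 1)/(n−1) for every ordering B ≠ E_{n,h}. -/
/-- The arithmetic cost of a parenthesisation on instance `k`. -/
def Paren.cost (k : ℕ → ℝ) : ∀ {a c : ℕ}, Paren a c → ℝ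
  | _, _, .leaf _ => 0
  | _, _, @Paren.node a b c l r => l.cost k + r.cost k + k a * k b * k c

namespace Paren

theorem lt'_s14 : ∀ {a c : ℕ}, Paren a c → a < c
  | _, _, .leaf i => Nat.lt_succ_self i
  | _, _, .node l r => lt_trans l.lt'_s14 r.lt'_s14

def AllH (h : ℕ) {a c : ℕ} (p : Paren a c) : Prop :=
  ∀ t ∈ p.triplets, t.1 = h ∨ t.2.1 = h ∨ t.2.2 = h

theorem self_mem {a b c : ℕ} (l : Paren a b) (r : Paren b c) :
    ((a, b, c) : ℕ × ℕ × ℕ) ∈ (Paren.node l r).triplets := by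
  simp [Paren.triplets]

theorem allh_left {h : ℕ} {a b c : ℕ} {l : Paren a b} {r : Paren b c}
    (hp : AllH h (Paren.node l r)) : AllH h l := by
  intro t ht
  exact hp t (by simp [Paren.triplets]; tauto)

theorem allh_right {h : ℕ} {a b c : ℕ} {l : Paren a b} {r : Paren b c}
    (hp : AllH h (Paren.node l r)) : AllH h r := by
  intro t ht
  exact hp t (by simp [Paren.triplets]; tauto)

theorem split_eq {h a b c : ℕ} (l : Paren a b) (r : Paren b c)
    (hall : AllH h (Paren.node l r)) :
    b = if h ≤ a then c - 1 else if c ≤ h then a + 1 else h := by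
  have h1 := l.lt'_s14
  have h2 := r.lt'_s14
  have hroot := hall (a, b, c) (self_mem l r)
  simp only at hroot
  by_cases hha : h ≤ a
  · -- right child must be a leaf
    rw [if_pos hha]
    cases r with
    | leaf i => omega
    | @node _ m _ l2 r2 =>
      exfalso
      have h3 := l2.lt'_s14
      have h4 := r2.lt'_s14
      have hm := hall (b, m, c) (by simp [Paren.triplets])
      simp only at hm
      omega
  · rw [if_neg hha]
    by_cases hhc : c ≤ h
    · rw [if_pos hhc]
      cases l with
      | leaf i => omega
      | @node _ m _ l2 r2 =>
        exfalso
        have h3 := l2.lt'_s14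
        have h4 := r2.lt'_s14
        have hm := hall (a, m, b) (by simp [Paren.triplets])
        simp only at hm
        omega
    · rw [if_neg hhc]
      omega

theorem uniq (h : ℕ) : ∀ {a c : ℕ} (p q : Paren a c), AllH h p → AllH h q → p = q := by
  intro a c p
  induction p with
  | leaf i =>
    intro q _ _
    cases q with
    | leaf => rfl
    | node l r =>
      exfalso
      have := l.lt'_s14; have := r.lt'_s14; omega
  | node l r ihl ihr =>
    rename_i a b c
    intro q hp hq
    cases q with
    | leaf =>
      exfalso
      have := l.lt'_s14; have := r.lt'_s14; omega
    | node l' r' =>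
      rename_i b'
      have hb : b = b' := by
        rw [split_eq l r hp, split_eq l' r' hq]
      subst hb
      rw [ihl l' (allh_left hp) (allh_left hq), ihr r' (allh_right hp) (allh_right hq)]

end Paren

namespace Paren

theorem prod_ge {h : ℕ} {A : ℝ} (hA : 1 ≤ A) {a b c : ℕ} (hab : a < b) (hbc : b < c) :
    A ^ 2 ≤ (if a = h then (1:ℝ) else A) * (if b = h then (1:ℝ) else A) *
      (if c = h then (1:ℝ) else A) := by
  have h0 : (0:ℝ) ≤ A := by linarith
  by_cases ha : a = h <;> by_cases hb : b = h <;> by_cases hc : c = h <;>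
    simp_all <;> nlinarith

theorem cost_allh (h : ℕ) (A : ℝ) : ∀ {a c : ℕ} (p : Paren a c), AllH h p →
    p.cost (fun i => if i = h then 1 else A) = ((c:ℝ) - a - 1) * A ^ 2 := by
  intro a c p
  induction p with
  | leaf i =>
    intro _
    simp [Paren.cost]
  | node l r ihl ihr =>
    rename_i a b c
    intro hp
    have h1 := l.lt'_s14
    have h2 := r.lt'_s14
    have hroot := hp (a, b, c) (self_mem l r)
    simp only at hroot
    have hprod : (if a = h then (1:ℝ) else A) * (if b = h then (1:ℝ) else A) *
        (if c = h then (1:ℝ) else A) = A ^ 2 := by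
      rcases hroot with h' | h' | h'
      · rw [if_pos h', if_neg (by omega), if_neg (by omega)]; ring
      · rw [if_neg (by omega), if_pos h', if_neg (by omega)]; ring
      · rw [if_neg (by omega), if_neg (by omega), if_pos h']; ring
    simp only [Paren.cost]
    rw [ihl (allh_left hp), ihr (allh_right hp)]
    rw [hprod]
    ring

theorem cost_lb (h : ℕ) {A : ℝ} (hA : 1 ≤ A) : ∀ {a c : ℕ} (p : Paren a c),
    ((c:ℝ) - a - 1) * A ^ 2 ≤ p.cost (fun i => if i = h then 1 else A) := by
  intro a c p
  induction p with
  | leaf i =>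
    simp [Paren.cost]
  | node l r ihl ihr =>
    rename_i a b c
    have h1 := l.lt'_s14
    have h2 := r.lt'_s14
    have hpr := prod_ge (h := h) hA h1 h2
    simp only [Paren.cost]
    have key : ((c:ℝ) - a - 1) * A ^ 2 =
        ((b:ℝ) - a - 1) * A ^ 2 + ((c:ℝ) - b - 1) * A ^ 2 + A ^ 2 := by ring
    linarith

theorem cost_bad (h : ℕ) {A : ℝ} (hA : 1 ≤ A) : ∀ {a c : ℕ} (p : Paren a c),
    (∃ t ∈ p.triplets, t.1 ≠ h ∧ t.2.1 ≠ h ∧ t.2.2 ≠ h) →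
    ((c:ℝ) - a - 2) * A ^ 2 + A ^ 3 ≤ p.cost (fun i => if i = h then 1 else A) := by
  intro a c p
  induction p with
  | leaf i =>
    rintro ⟨t, ht, -⟩
    simp [Paren.triplets] at ht
  | node l r ihl ihr =>
    rename_i a b c
    rintro ⟨t, ht, hbad⟩
    have h1 := l.lt'_s14
    have h2 := r.lt'_s14
    simp only [Paren.triplets, Finset.mem_union, Finset.mem_singleton] at ht
    simp only [Paren.cost]
    rcases ht with (ht | ht) | ht
    · have hl := ihl ⟨t, ht, hbad⟩
      have hr := cost_lb h hA r
      have hpr := prod_ge (h := h) hA h1 h2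
      have key : ((c:ℝ) - a - 2) * A ^ 2 + A ^ 3 =
          (((b:ℝ) - a - 2) * A ^ 2 + A ^ 3) + ((c:ℝ) - b - 1) * A ^ 2 + A ^ 2 := by ring
      linarith
    · have hr := ihr ⟨t, ht, hbad⟩
      have hl := cost_lb h hA l
      have hpr := prod_ge (h := h) hA h1 h2
      have key : ((c:ℝ) - a - 2) * A ^ 2 + A ^ 3 =
          ((b:ℝ) - a - 1) * A ^ 2 + (((c:ℝ) - b - 2) * A ^ 2 + A ^ 3) + A ^ 2 := by ring
      linarith
    · subst ht
      obtain ⟨ha, hb, hc⟩ := hbad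
      simp only at ha hb hc
      have hpr : (if a = h then (1:ℝ) else A) * (if b = h then (1:ℝ) else A) *
          (if c = h then (1:ℝ) else A) = A ^ 3 := by
        rw [if_neg ha, if_neg hb, if_neg hc]; ring
      have hl := cost_lb h hA l
      have hr := cost_lb h hA r
      have key : ((c:ℝ) - a - 2) * A ^ 2 + A ^ 3 =
          ((b:ℝ) - a - 1) * A ^ 2 + ((c:ℝ) - b - 1) * A ^ 2 + A ^ 3 := by ring
      rw [hpr]
      linarith

end Paren

/-- For every `r > 0` there is an instance (take `k_h = 1`, `k_i = α` otherwise,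
with `α` a sufficiently large integer) on which the fan-out ordering `E_{n,h}`
(the ordering all of whose triplets contain `h`) is cheaper than `1/(1+r)`
times the cost of any other ordering; in fact
`T(B,k)/T(E,k) ≥ 1 + (α-1)/(n-1)` for every ordering `B ≠ E`. -/
theorem fanout_arbitrarily_better (n h : ℕ) (hn : 3 ≤ n) (hh : h ≤ n)
    (r : ℝ) (hr : 0 < r) :
    ∃ α : ℕ, 1 < α ∧ ∀ (E B : Paren 0 n),
      (∀ t ∈ E.triplets, t.1 = h ∨ t.2.1 = h ∨ t.2.2 = h) → B ≠ E →
      E.cost (fun i => if i = h then 1 else (α : ℝ)) <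
        (1 / (1 + r)) * B.cost (fun i => if i = h then 1 else (α : ℝ)) ∧
      1 + ((α : ℝ) - 1) / ((n : ℝ) - 1) ≤
        B.cost (fun i => if i = h then 1 else (α : ℝ)) /
          E.cost (fun i => if i = h then 1 else (α : ℝ)) := by
  refine ⟨⌈(1 + r) * ((n : ℝ) - 1)⌉₊ + 2, by omega, ?_⟩
  set A : ℝ := ((⌈(1 + r) * ((n : ℝ) - 1)⌉₊ + 2 : ℕ) : ℝ) with hAdef
  have hnR : (3:ℝ) ≤ (n : ℝ) := by exact_mod_cast hn
  have hA2 : (2:ℝ) ≤ A := by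
    rw [hAdef]; push_cast; have := Nat.zero_le ⌈(1 + r) * ((n : ℝ) - 1)⌉₊
    have : (0:ℝ) ≤ (⌈(1 + r) * ((n : ℝ) - 1)⌉₊ : ℝ) := by positivity
    linarith
  have hA1 : (1:ℝ) ≤ A := by linarith
  have hAgt : (1 + r) * ((n : ℝ) - 1) < A := by
    have h1 : (1 + r) * ((n : ℝ) - 1) ≤ (⌈(1 + r) * ((n : ℝ) - 1)⌉₊ : ℝ) := Nat.le_ceil _
    have h2 : ((⌈(1 + r) * ((n : ℝ) - 1)⌉₊ : ℝ)) + 2 = A := by rw [hAdef]; push_cast; ring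
    linarith
  have hApos2 : (0:ℝ) < A ^ 2 := by positivity
  intro E B hE hBE
  have hEc : E.cost (fun i => if i = h then 1 else A) = ((n:ℝ) - 1) * A ^ 2 := by
    have := Paren.cost_allh h A E hE
    simpa using this
  have hBall : ¬ Paren.AllH h B := fun hB => hBE (Paren.uniq h B E hB hE)
  have hbad : ∃ t ∈ B.triplets, t.1 ≠ h ∧ t.2.1 ≠ h ∧ t.2.2 ≠ h := by
    by_contra hc
    push_neg at hc
    apply hBall
    intro t ht
    have := hc t ht
    tauto
  have hBc : ((n:ℝ) - 2) * A ^ 2 + A ^ 3 ≤ B.cost (fun i => if i = h then 1 else A) := by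
    have := Paren.cost_bad h hA1 B hbad
    simpa using this
  have h1r : (0:ℝ) < 1 + r := by linarith
  have key : (0:ℝ) < A ^ 2 * (A - (1 + r) * ((n:ℝ) - 1)) :=
    mul_pos hApos2 (sub_pos.mpr hAgt)
  have hn2 : (0:ℝ) ≤ ((n:ℝ) - 2) * A ^ 2 := mul_nonneg (by linarith) (le_of_lt hApos2)
  constructor
  · rw [hEc, one_div, inv_mul_eq_div, lt_div_iff₀ h1r]
    nlinarith [key, hn2, hBc]
  · have hn1 : (0:ℝ) < (n:ℝ) - 1 := by linarith
    have Epos : (0:ℝ) < ((n:ℝ) - 1) * A ^ 2 := mul_pos hn1 hApos2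
    rw [hEc, le_div_iff₀ Epos]
    have expand : (1 + (A - 1) / ((n:ℝ) - 1)) * (((n:ℝ) - 1) * A ^ 2) =
        ((n:ℝ) - 2) * A ^ 2 + A ^ 3 := by
      field_simp
      ring
    rw [expand]
    exact hBc
end
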